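/- arXiv:math/0412461 — 6 statements merged into one kernel-verified Lean document; each statement's English description precedes it below -/
import Mathlib

section
/- Let S ⊂ ℝ³ (with Minkowski form Q(v) = v₁² + v₂² − v₃²) be a pseudo-spacelike entire graph over the plane {x₃ = 0}, i.e., S = {(x, f(x)) : x ∈ ℝ²} for some function f, and for every x ∈ S, every other point of S lies in the exterior of the light cone of x (Q(p − x) > 0 for all p ∈ S, p ≠ x). Then for every timelike future-pointing vector v (Q(v) < 0, v₃ > 0), S is also a graph over the plane orthogonal to v: every line of direction v meets S in exactly one point. -/
/-- Minkowski quadratic form on ℝ³. -/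
noncomputable def QL (p : ℝ × ℝ × ℝ) : ℝ := p.1 ^ 2 + p.2.1 ^ 2 - p.2.2 ^ 2

/-!
A pseudo-spacelike graph `x₃ = f(x₁, x₂)` has `(f x - f y)² < |x - y|²`, so `f` is 1-Lipschitz
for the Euclidean norm. Along a timelike line `z + s v` the height of the line therefore outruns
the graph: `s ↦ z₃ + s v₃ - f(z' + s v')` differs from `s ↦ s v₃` by at most `|s| |v'|` with
`|v'| < v₃`, so it is a continuous function tending to `±∞` at `±∞`, and has a zero. A second
zero would give two points of `S` whose difference `(s - t) v` is timelike.
-/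

open Filter

def IsPseudoSpacelike (S : Set (ℝ × ℝ × ℝ)) : Prop :=
  ∀ p ∈ S, ∀ q ∈ S, p ≠ q → 0 < QL (p - q)

lemma QL_smul (a : ℝ) (p : ℝ × ℝ × ℝ) : QL (a • p) = a ^ 2 * QL p := by
  simp only [QL, Prod.smul_fst, Prod.smul_snd, smul_eq_mul]
  ring

lemma IsPseudoSpacelike.eq_of_mem_line {S : Set (ℝ × ℝ × ℝ)} (hS : IsPseudoSpacelike S)
    {v : ℝ × ℝ × ℝ} (hv : QL v < 0) {z : ℝ × ℝ × ℝ} {s t : ℝ}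
    (hs : z + s • v ∈ S) (ht : z + t • v ∈ S) : s = t := by
  by_contra hst
  have htimelike : QL ((z + s • v) - (z + t • v)) < 0 := by
    rw [add_sub_add_left_eq_sub, ← sub_smul, QL_smul]
    have : s - t ≠ 0 := sub_ne_zero.2 hst
    exact mul_neg_of_pos_of_neg (by positivity) hv
  have hne : z + s • v ≠ z + t • v := fun h => by simp [h, QL] at htimelike
  exact (hS _ hs _ ht hne).not_gt htimelike

lemma IsPseudoSpacelike.sq_sub_le {f : ℝ × ℝ → ℝ}
    (hf : IsPseudoSpacelike {p | p.2.2 = f (p.1, p.2.1)}) (x y : ℝ × ℝ) :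
    (f x - f y) ^ 2 ≤ (x.1 - y.1) ^ 2 + (x.2 - y.2) ^ 2 := by
  rcases eq_or_ne x y with rfl | hxy
  · simp
  have hne : ((x.1, x.2, f x) : ℝ × ℝ × ℝ) ≠ (y.1, y.2, f y) := fun h =>
    hxy (Prod.ext (congrArg (·.1) h) (congrArg (·.2.1) h))
  have := hf _ rfl _ rfl hne
  simp only [QL, Prod.mk_sub_mk] at this
  linarith

section SqSubLe

variable {f : ℝ × ℝ → ℝ} (hf : ∀ x y, (f x - f y) ^ 2 ≤ (x.1 - y.1) ^ 2 + (x.2 - y.2) ^ 2)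
include hf

lemma lipschitzWith_two_of_sq_sub_le : LipschitzWith 2 f := by
  refine LipschitzWith.of_dist_le_mul fun x y => ?_
  have h₁ : |x.1 - y.1| ≤ dist x y := by
    rw [← Real.dist_eq, Prod.dist_eq]; exact le_max_left _ _
  have h₂ : |x.2 - y.2| ≤ dist x y := by
    rw [← Real.dist_eq, Prod.dist_eq]; exact le_max_right _ _
  rw [Real.dist_eq, NNReal.coe_ofNat]
  refine abs_le_of_sq_le_sq ?_ (by positivity)
  nlinarith [hf x y, sq_abs (x.1 - y.1), sq_abs (x.2 - y.2), abs_nonneg (x.1 - y.1),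
    abs_nonneg (x.2 - y.2)]

lemma abs_apply_add_smul_sub_le (x w : ℝ × ℝ) (s : ℝ) :
    |f (x + s • w) - f x| ≤ √(w.1 ^ 2 + w.2 ^ 2) * |s| := by
  rw [← Real.sqrt_sq_eq_abs, ← Real.sqrt_sq_eq_abs s, ← Real.sqrt_mul (by positivity)]
  refine Real.sqrt_le_sqrt ((hf _ _).trans_eq ?_)
  simp only [Prod.fst_add, Prod.snd_add, Prod.smul_fst, Prod.smul_snd, smul_eq_mul]
  ring

end SqSubLe

lemma surjective_of_abs_sub_sub_mul_le {g : ℝ → ℝ} (hg : Continuous g) {a c : ℝ} (hca : c < a)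
    (h : ∀ s, |g s - g 0 - a * s| ≤ c * |s|) : Function.Surjective g := by
  have hslope : 0 < a - c := sub_pos.2 hca
  refine hg.surjective ?_ ?_
  · refine tendsto_atTop_mono' _ ?_
      (tendsto_atTop_add_const_left _ (g 0) (tendsto_id.const_mul_atTop hslope))
    filter_upwards [eventually_ge_atTop 0] with s hs
    have := (abs_le.1 (h s)).1
    rw [abs_of_nonneg hs] at this
    simp only [id]
    linarith
  · refine tendsto_atBot_mono' _ ?_
      (tendsto_atBot_add_const_left _ (g 0) (tendsto_id.const_mul_atBot hslope))
    filter_upwards [eventually_le_atBot 0] with s hs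
    have := (abs_le.1 (h s)).2
    rw [abs_of_nonpos hs] at this
    simp only [id]
    linarith

/-- A pseudo-spacelike entire graph `S` over the plane `{x₃ = 0}`
is a graph over the plane orthogonal to any future-pointing timelike vector `v`:
every line with direction `v` meets `S` in exactly one point. -/
theorem pseudoSpacelike_graph_over_any_spacelike_plane (f : ℝ × ℝ → ℝ)
    (S : Set (ℝ × ℝ × ℝ)) (hS : S = {p | p.2.2 = f (p.1, p.2.1)})
    (hps : ∀ p ∈ S, ∀ q ∈ S, p ≠ q → 0 < QL (p - q))
    (v : ℝ × ℝ × ℝ) (hv : QL v < 0) (hv3 : 0 < v.2.2) :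
    ∀ z : ℝ × ℝ × ℝ, ∃! s : ℝ, z + s • v ∈ S := by
  subst hS
  intro z
  have hf := IsPseudoSpacelike.sq_sub_le hps
  have hcv : √(v.1 ^ 2 + v.2.1 ^ 2) < v.2.2 :=
    (Real.sqrt_lt' hv3).2 (by unfold QL at hv; linarith)
  set g : ℝ → ℝ := fun s => z.2.2 + s * v.2.2 - f ((z.1, z.2.1) + s • (v.1, v.2.1))
  have hmem : ∀ s, z + s • v ∈ {p | p.2.2 = f (p.1, p.2.1)} ↔ g s = 0 := fun s => by
    simp [g, sub_eq_zero]
  have hgc : Continuous g := by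
    have := (lipschitzWith_two_of_sq_sub_le hf).continuous
    fun_prop
  have hg_near_linear : ∀ s, |g s - g 0 - v.2.2 * s| ≤ √(v.1 ^ 2 + v.2.1 ^ 2) * |s| := fun s => by
    rw [← abs_neg]
    convert abs_apply_add_smul_sub_le hf (z.1, z.2.1) (v.1, v.2.1) s using 2
    simp only [g, zero_smul, add_zero, zero_mul]
    ring
  obtain ⟨s, hs⟩ := surjective_of_abs_sub_sub_mul_le hgc hcv hg_near_linear 0
  exact ⟨s, (hmem s).2 hs, fun t ht => IsPseudoSpacelike.eq_of_mem_line hps hv ht ((hmem s).2 hs)⟩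
end

section
/- Let γ : [0,1] → ℝ³ be a piecewise C¹ curve such that γ'(t) is spacelike or zero for all t (with respect to Q(v) = v₁² + v₂² − v₃²), and suppose the orthogonal projection π(γ(t)) = (γ₁(t), γ₂(t)) onto the plane {x₃ = 0} is injective and has image contained in a Euclidean segment. Then for t₁ ≠ t₂ with π(γ(t₁)) ≠ π(γ(t₂)), the vector γ(t₁) − γ(t₂) is spacelike: Q(γ(t₁) − γ(t₂)) > 0. -/
/-!
Rotate the horizontal plane so that the segment becomes parallel to the first axis: with
`a(t)` the coordinate of `π γ(t)` along the segment and `z(t) = γ₃(t)`, the curve reads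
`(a(t), const, z(t))`, the chord satisfies `Q(γ(t₁) − γ(t₂)) = Δa² − Δz²`, and the velocity
satisfies `z' = 0` or `|z'| < |a'|`. Since `a` is injective and continuous it is strictly
monotone, and then so are `a + z` and `a − z`, which gives `|Δz| < |Δa|`.
-/

open Set

section Calculus

variable {𝕜 E F : Type*} [NontriviallyNormedField 𝕜] [NormedAddCommGroup E] [NormedSpace 𝕜 E]
  [NormedAddCommGroup F] [NormedSpace 𝕜 F] {f : 𝕜 → E × F} {p : E × F} {x : 𝕜}

theorem HasDerivAt.fst (h : HasDerivAt f p x) : HasDerivAt (fun x => (f x).1) p.1 x :=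
  (ContinuousLinearMap.fst 𝕜 E F).hasFDerivAt.comp_hasDerivAt x h

theorem HasDerivAt.snd (h : HasDerivAt f p x) : HasDerivAt (fun x => (f x).2) p.2 x :=
  (ContinuousLinearMap.snd 𝕜 E F).hasFDerivAt.comp_hasDerivAt x h

end Calculus

theorem HasDerivAt.eq_zero_of_eqOn {f : ℝ → ℝ} {f' x a b c : ℝ} (h : HasDerivAt f f' x)
    (hx : x ∈ Ioo a b) (hc : EqOn f (fun _ => c) (Ioo a b)) : f' = 0 :=
  h.unique <| (hasDerivAt_const x c).congr_of_eventuallyEq <|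
    Filter.eventuallyEq_of_mem (isOpen_Ioo.mem_nhds hx) hc

section Dominated

variable {f g f' g' : ℝ → ℝ} {a b : ℝ}

/-- Where `g' = 0` the sum `f + g` inherits monotonicity from `f`; elsewhere it increases
strictly, so it can only be constant on an interval where `f' = 0`, i.e. where `f` is
constant, which strict monotonicity of `f` forbids. -/
theorem StrictMonoOn.add_of_deriv_dominated (hf : StrictMonoOn f (Icc a b))
    (hfc : ContinuousOn f (Icc a b)) (hgc : ContinuousOn g (Icc a b))
    (hf' : ∀ t ∈ Ioo a b, HasDerivAt f (f' t) t) (hg' : ∀ t ∈ Ioo a b, HasDerivAt g (g' t) t)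
    (hdom : ∀ t ∈ Ioo a b, g' t = 0 ∨ |g' t| < |f' t|) :
    StrictMonoOn (f + g) (Icc a b) := by
  have hf'_nonneg : ∀ t ∈ Ioo a b, 0 ≤ f' t := fun t ht =>
    (hf' t ht).hasDerivWithinAt.derivWithin
      (uniqueDiffOn_Icc (ht.1.trans ht.2) t (Ioo_subset_Icc_self ht)) ▸
      hf.monotoneOn.derivWithin_nonneg
  have hsum : ∀ t ∈ Ioo a b, 0 ≤ f' t + g' t ∧ (f' t + g' t = 0 → f' t = 0) := by
    intro t ht
    have h0 := hf'_nonneg t ht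
    rcases hdom t ht with hg0 | hlt
    · simp [hg0, h0]
    · rw [abs_of_nonneg h0] at hlt
      have := neg_abs_le (g' t)
      exact ⟨by linarith, fun h => by linarith⟩
  have hmono : MonotoneOn (f + g) (Icc a b) := by
    refine monotoneOn_of_hasDerivWithinAt_nonneg (f' := f' + g') (convex_Icc a b)
      (hfc.add hgc) ?_ ?_
    · rw [interior_Icc]
      exact fun t ht => ((hf' t ht).add (hg' t ht)).hasDerivWithinAt
    · rw [interior_Icc]
      exact fun t ht => (hsum t ht).1
  intro x hx y hy hxy
  refine (hmono hx hy hxy.le).lt_of_ne fun heq => ?_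
  have hsub : Ioo x y ⊆ Ioo a b := Ioo_subset_Ioo hx.1 hy.2
  have hconst : EqOn (f + g) (fun _ => (f + g) x) (Ioo x y) := fun t ht =>
    le_antisymm (heq ▸ hmono (Ioo_subset_Icc_self (hsub ht)) hy ht.2.le)
      (hmono hx (Ioo_subset_Icc_self (hsub ht)) ht.1.le)
  have hzero : ∀ t ∈ Ioo x y, f' t = 0 := fun t ht =>
    (hsum t (hsub ht)).2 <| ((hf' t (hsub ht)).add (hg' t (hsub ht))).eq_zero_of_eqOn ht hconst
  obtain ⟨c, hc, hslope⟩ := exists_hasDerivAt_eq_slope f f' hxy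
    (hfc.mono (Icc_subset_Icc hx.1 hy.2)) fun t ht => hf' t (hsub ht)
  rw [hzero c hc, eq_comm, div_eq_zero_iff, sub_eq_zero, sub_eq_zero] at hslope
  exact hslope.elim (hf hx hy hxy).ne' hxy.ne'

theorem StrictMonoOn.abs_sub_lt_sub_of_deriv_dominated (hf : StrictMonoOn f (Icc a b))
    (hfc : ContinuousOn f (Icc a b)) (hgc : ContinuousOn g (Icc a b))
    (hf' : ∀ t ∈ Ioo a b, HasDerivAt f (f' t) t) (hg' : ∀ t ∈ Ioo a b, HasDerivAt g (g' t) t)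
    (hdom : ∀ t ∈ Ioo a b, g' t = 0 ∨ |g' t| < |f' t|) {x y : ℝ} (hx : x ∈ Icc a b)
    (hy : y ∈ Icc a b) (hxy : x < y) :
    |g y - g x| < f y - f x := by
  have hadd := hf.add_of_deriv_dominated hfc hgc hf' hg' hdom hx hy hxy
  have hsub := hf.add_of_deriv_dominated hfc hgc.neg hf' (fun t ht => (hg' t ht).neg)
    (fun t ht => by simpa only [neg_eq_zero, abs_neg] using hdom t ht) hx hy hxy
  simp only [Pi.add_apply, Pi.neg_apply] at hadd hsub
  exact abs_sub_lt_iff.2 ⟨by linarith, by linarith⟩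

theorem abs_sub_lt_abs_sub_of_deriv_dominated (hab : a ≤ b) (hfc : ContinuousOn f (Icc a b))
    (hinj : InjOn f (Icc a b)) (hgc : ContinuousOn g (Icc a b))
    (hf' : ∀ t ∈ Ioo a b, HasDerivAt f (f' t) t) (hg' : ∀ t ∈ Ioo a b, HasDerivAt g (g' t) t)
    (hdom : ∀ t ∈ Ioo a b, g' t = 0 ∨ |g' t| < |f' t|) {x y : ℝ} (hx : x ∈ Icc a b)
    (hy : y ∈ Icc a b) (hxy : x ≠ y) :
    |g x - g y| < |f x - f y| := by
  have hlt : ∀ x ∈ Icc a b, ∀ y ∈ Icc a b, x < y → |g y - g x| < |f y - f x| := by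
    intro x hx y hy hxy
    rcases hfc.strictMonoOn_of_injOn_Icc' hab hinj with hmono | hanti
    · exact (hmono.abs_sub_lt_sub_of_deriv_dominated hfc hgc hf' hg' hdom hx hy hxy).trans_le
        (le_abs_self _)
    · have := hanti.neg.abs_sub_lt_sub_of_deriv_dominated hfc.neg hgc
        (fun t ht => (hf' t ht).neg) hg' (fun t ht => by simpa only [abs_neg] using hdom t ht)
        hx hy hxy
      exact this.trans_le (by simpa only [neg_sub_neg, abs_sub_comm] using le_abs_self (f x - f y))
  rcases hxy.lt_or_gt with h | h
  · rw [abs_sub_comm, abs_sub_comm (f x)]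
    exact hlt x hx y hy h
  · exact hlt y hy x hx h

end Dominated

theorem exists_unit_normal_segment_subset (u v : ℝ × ℝ) :
    ∃ c s k : ℝ, c ^ 2 + s ^ 2 = 1 ∧ segment ℝ u v ⊆ {w | s * w.1 - c * w.2 = k} := by
  set d : ℂ := ⟨v.1 - u.1, v.2 - u.2⟩
  have hc : ‖d‖ * Real.cos d.arg = v.1 - u.1 := Complex.norm_mul_cos_arg d
  have hs : ‖d‖ * Real.sin d.arg = v.2 - u.2 := Complex.norm_mul_sin_arg d
  refine ⟨Real.cos d.arg, Real.sin d.arg, Real.sin d.arg * u.1 - Real.cos d.arg * u.2,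
    Real.cos_sq_add_sin_sq _, ?_⟩
  rw [segment_eq_image']
  rintro _ ⟨θ, -, rfl⟩
  simp only [mem_ofPred_eq, Prod.fst_add, Prod.snd_add, Prod.smul_fst, Prod.smul_snd,
    Prod.fst_sub, Prod.snd_sub, smul_eq_mul]
  linear_combination θ * Real.cos d.arg * hs - θ * Real.sin d.arg * hc

theorem QL_pos_iff_of_sq_add_sq_eq_one {c s : ℝ} (h : c ^ 2 + s ^ 2 = 1) {p : ℝ × ℝ × ℝ}
    (hp : s * p.1 - c * p.2.1 = 0) : 0 < QL p ↔ |p.2.2| < |c * p.1 + s * p.2.1| := by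
  have hQ : QL p = (c * p.1 + s * p.2.1) ^ 2 - p.2.2 ^ 2 := by
    unfold QL
    linear_combination (-(p.1 ^ 2 + p.2.1 ^ 2)) * h + (s * p.1 - c * p.2.1) * hp
  rw [hQ, sub_pos, sq_lt_sq]

theorem Prod.ext_of_sq_add_sq_eq_one {c s : ℝ} (h : c ^ 2 + s ^ 2 = 1) {x y : ℝ × ℝ}
    (h₁ : c * x.1 + s * x.2 = c * y.1 + s * y.2) (h₂ : s * x.1 - c * x.2 = s * y.1 - c * y.2) :
    x = y :=
  Prod.ext (by linear_combination c * h₁ + s * h₂ - (x.1 - y.1) * h)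
    (by linear_combination s * h₁ - c * h₂ - (x.2 - y.2) * h)

theorem vertical_dominated_of_spacelike_of_eqOn {c s k a b t : ℝ} (hcs : c ^ 2 + s ^ 2 = 1)
    {γ : ℝ → ℝ × ℝ × ℝ} {γ' : ℝ × ℝ × ℝ} (hγ : HasDerivAt γ γ' t) (ht : t ∈ Ioo a b)
    (hplane : ∀ t ∈ Ioo a b, s * (γ t).1 - c * (γ t).2.1 = k) (hspace : γ' = 0 ∨ 0 < QL γ') :
    γ'.2.2 = 0 ∨ |γ'.2.2| < |c * γ'.1 + s * γ'.2.1| := by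
  have hplane' : s * γ'.1 - c * γ'.2.1 = 0 :=
    ((hγ.fst.const_mul s).sub (hγ.snd.fst.const_mul c)).eq_zero_of_eqOn ht hplane
  rcases hspace with h0 | hQ
  · exact .inl (by rw [h0]; rfl)
  · exact .inr ((QL_pos_iff_of_sq_add_sq_eq_one hcs hplane').1 hQ)

/-- a (piecewise) C¹ curve in Minkowski ℝ³ with spacelike-or-zero
velocity whose projection to `{x₃ = 0}` is injective with image in a Euclidean
segment has spacelike chords: `Q(γ(t₁) − γ(t₂)) > 0` whenever the projections
of `γ(t₁)` and `γ(t₂)` differ. -/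
theorem radial_spacelike_curve_has_spacelike_chords (γ γ' : ℝ → ℝ × ℝ × ℝ)
    (hderiv : ∀ t ∈ Set.Icc (0:ℝ) 1, HasDerivAt γ (γ' t) t)
    (hspace : ∀ t ∈ Set.Icc (0:ℝ) 1, γ' t = 0 ∨ 0 < QL (γ' t))
    (hinj : Set.InjOn (fun t => ((γ t).1, (γ t).2.1)) (Set.Icc 0 1))
    (hseg : ∃ u v : ℝ × ℝ, ∀ t ∈ Set.Icc (0:ℝ) 1, ((γ t).1, (γ t).2.1) ∈ segment ℝ u v) :
    ∀ t₁ ∈ Set.Icc (0:ℝ) 1, ∀ t₂ ∈ Set.Icc (0:ℝ) 1,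
      ((γ t₁).1, (γ t₁).2.1) ≠ ((γ t₂).1, (γ t₂).2.1) → 0 < QL (γ t₁ - γ t₂) := by
  intro t₁ ht₁ t₂ ht₂ hne
  obtain ⟨u, v, hseg⟩ := hseg
  obtain ⟨c, s, k, hcs, hline⟩ := exists_unit_normal_segment_subset u v
  have hacross : ∀ t ∈ Icc (0:ℝ) 1, s * (γ t).1 - c * (γ t).2.1 = k := fun t ht =>
    hline (hseg t ht)
  have ha' : ∀ t ∈ Icc (0:ℝ) 1,
      HasDerivAt (fun t => c * (γ t).1 + s * (γ t).2.1) (c * (γ' t).1 + s * (γ' t).2.1) t :=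
    fun t ht => ((hderiv t ht).fst.const_mul c).add ((hderiv t ht).snd.fst.const_mul s)
  have hz' : ∀ t ∈ Icc (0:ℝ) 1, HasDerivAt (fun t => (γ t).2.2) (γ' t).2.2 t := fun t ht =>
    (hderiv t ht).snd.snd
  have hchord := abs_sub_lt_abs_sub_of_deriv_dominated zero_le_one
    (fun t ht => (ha' t ht).continuousAt.continuousWithinAt)
    (fun t ht t' ht' h => hinj ht ht' <|
      Prod.ext_of_sq_add_sq_eq_one hcs h ((hacross t ht).trans (hacross t' ht').symm))
    (fun t ht => (hz' t ht).continuousAt.continuousWithinAt)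
    (fun t ht => ha' t (Ioo_subset_Icc_self ht)) (fun t ht => hz' t (Ioo_subset_Icc_self ht))
    (fun t ht => vertical_dominated_of_spacelike_of_eqOn hcs (hderiv t (Ioo_subset_Icc_self ht))
      ht (fun t' ht' => hacross t' (Ioo_subset_Icc_self ht')) (hspace t (Ioo_subset_Icc_self ht)))
    ht₁ ht₂ (fun h => hne (h ▸ rfl))
  refine (QL_pos_iff_of_sq_add_sq_eq_one hcs ?_).2 ?_
  · simp only [Prod.fst_sub, Prod.snd_sub]
    linear_combination hacross t₁ ht₁ - hacross t₂ ht₂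
  · simp only [Prod.fst_sub, Prod.snd_sub]
    convert hchord using 2
    ring
end

section
/- Let S ⊂ ℝ³ be a pseudo-spacelike entire graph over the spacelike plane {x₃ = 0} (any two distinct points of S differ by a Q-spacelike vector, Q(v) = v₁² + v₂² − v₃²). Suppose S is disjoint from the lightlike line ℓ = {(0, s, s) : s ∈ ℝ} and S lies below ℓ in the sense that for each s, the point of S over (0,s) has third coordinate less than s. Then S is disjoint from the lightlike plane {x₂ = x₃}, i.e., S ⊂ {(x₁,x₂,x₃) : x₂ > x₃} ∪ {(x₁,x₂,x₃) : x₂ < x₃}, and in fact S ⊂ {x₃ < x₂}. -/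
theorem sq_sub_le_of_pseudoSpacelike {f : ℝ × ℝ → ℝ}
    (hps : ∀ x y : ℝ × ℝ, x ≠ y →
      0 < (x.1 - y.1) ^ 2 + (x.2 - y.2) ^ 2 - (f x - f y) ^ 2)
    (x y : ℝ × ℝ) : (f x - f y) ^ 2 ≤ (x.1 - y.1) ^ 2 + (x.2 - y.2) ^ 2 := by
  rcases eq_or_ne x y with rfl | hxy
  · simp
  · linarith [hps x y hxy]

theorem le_snd_of_le_on_lightlike_line {f : ℝ × ℝ → ℝ}
    (hcausal : ∀ x y : ℝ × ℝ, (f x - f y) ^ 2 ≤ (x.1 - y.1) ^ 2 + (x.2 - y.2) ^ 2)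
    (hbelow : ∀ s : ℝ, f (0, s) ≤ s) (x : ℝ × ℝ) : f x ≤ x.2 := by
  by_contra! hx
  set d := f x - x.2 with hd
  have hd_pos : 0 < d := by linarith
  set s := x.2 - x.1 ^ 2 / (2 * d)
  have hs : 2 * d * (x.2 - s) = x.1 ^ 2 := by simp only [s]; field_simp; ring
  have hs_nonneg : 0 ≤ x.2 - s := by nlinarith [sq_nonneg x.1]
  have hgap : x.2 - s + d ≤ f x - f (0, s) := by linarith [hbelow s]
  have hcone : x.1 ^ 2 + (x.2 - s) ^ 2 < (x.2 - s + d) ^ 2 := by nlinarith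
  have hsep := hcausal x (0, s)
  have hgap_sq : (x.2 - s + d) ^ 2 ≤ (f x - f (0, s)) ^ 2 :=
    pow_le_pow_left₀ (by linarith) hgap 2
  simp only [sub_zero] at hsep
  linarith

theorem lt_snd_of_le_snd {f : ℝ × ℝ → ℝ}
    (hps : ∀ x y : ℝ × ℝ, x ≠ y →
      0 < (x.1 - y.1) ^ 2 + (x.2 - y.2) ^ 2 - (f x - f y) ^ 2)
    (hle : ∀ x : ℝ × ℝ, f x ≤ x.2) (x : ℝ × ℝ) : f x < x.2 := by
  refine (hle x).lt_of_ne fun heq => ?_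
  have hne : x ≠ (x.1, x.2 - 1) := fun h => by linarith [congrArg Prod.snd h]
  have hsep := hps x (x.1, x.2 - 1) hne
  have hlower := hle (x.1, x.2 - 1)
  simp only [sub_self, sub_sub_cancel] at hsep hlower
  nlinarith

theorem pseudoSpacelike_graph_below_lightlike_line_general (f : ℝ × ℝ → ℝ)
    (hps : ∀ x y : ℝ × ℝ, x ≠ y →
      0 < (x.1 - y.1) ^ 2 + (x.2 - y.2) ^ 2 - (f x - f y) ^ 2)
    (hbelow : ∀ s : ℝ, f (0, s) < s) :
    (∀ x : ℝ × ℝ, f x ≠ x.2) ∧ (∀ x : ℝ × ℝ, f x < x.2) := by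
  have hle := le_snd_of_le_on_lightlike_line (sq_sub_le_of_pseudoSpacelike hps)
    fun s => (hbelow s).le
  have hlt := lt_snd_of_le_snd hps hle
  exact ⟨fun x => (hlt x).ne, hlt⟩

/-- A pseudo-spacelike entire graph `S = graph f` disjoint from the
lightlike line `ℓ = {(0,s,s)}` and lying below it is disjoint from the lightlike
plane `{x₂ = x₃}`; in fact `S ⊆ {x₃ < x₂}`. -/
theorem pseudoSpacelike_graph_below_lightlike_line (f : ℝ × ℝ → ℝ)
    (hps : ∀ x y : ℝ × ℝ, x ≠ y →
      0 < (x.1 - y.1) ^ 2 + (x.2 - y.2) ^ 2 - (f x - f y) ^ 2)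
    (hdisj : ∀ s : ℝ, f (0, s) ≠ s)
    (hbelow : ∀ s : ℝ, f (0, s) < s) :
    (∀ x : ℝ × ℝ, f x ≠ x.2) ∧ (∀ x : ℝ × ℝ, f x < x.2) :=
  pseudoSpacelike_graph_below_lightlike_line_general f hps hbelow
end

section
/- There is no 1-Lipschitz function f : ℝ² → ℝ (Euclidean norm on ℝ²) whose graph in ℝ³ is invariant under the parabolic screw motion R(x₁,x₂,x₃) = (x₁ − t·x₂ + t·x₃, t·x₁ + (1 − t²/2)x₂ + (t²/2)x₃, t·x₁ − (t²/2)x₂ + (1 + t²/2)x₃) + (0,0,λ), where t ≠ 0 and λ ≠ 0. -/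
set_option maxHeartbeats 1000000 in
/-- no 1-Lipschitz function `f : ℝ² → ℝ` (Euclidean norm) has a graph
in Minkowski ℝ³ invariant under the parabolic screw motion
`R(x₁,x₂,x₃) = (x₁ − t x₂ + t x₃, t x₁ + (1−t²/2)x₂ + (t²/2)x₃,
 t x₁ − (t²/2)x₂ + (1+t²/2)x₃) + (0,0,λ)`, `t ≠ 0`, `λ ≠ 0`. -/
theorem no_graph_invariant_under_parabolic_screw_motion (t lam : ℝ)
    (ht : t ≠ 0) (hlam : lam ≠ 0) :
    ¬ ∃ f : ℝ × ℝ → ℝ,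
      (∀ x y : ℝ × ℝ, (f x - f y) ^ 2 ≤ (x.1 - y.1) ^ 2 + (x.2 - y.2) ^ 2) ∧
      (fun p : ℝ × ℝ × ℝ =>
        ((p.1 - t * p.2.1 + t * p.2.2,
          t * p.1 + (1 - t ^ 2 / 2) * p.2.1 + (t ^ 2 / 2) * p.2.2,
          t * p.1 - (t ^ 2 / 2) * p.2.1 + (1 + t ^ 2 / 2) * p.2.2 + lam) : ℝ × ℝ × ℝ)) ''
        {p : ℝ × ℝ × ℝ | p.2.2 = f (p.1, p.2.1)}
        = {p : ℝ × ℝ × ℝ | p.2.2 = f (p.1, p.2.1)} := by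
  rintro ⟨f, hlip, hinv⟩
  set S : Set (ℝ × ℝ × ℝ) := {p : ℝ × ℝ × ℝ | p.2.2 = f (p.1, p.2.1)} with hS
  set R : ℝ × ℝ × ℝ → ℝ × ℝ × ℝ := fun p =>
    ((p.1 - t * p.2.1 + t * p.2.2,
      t * p.1 + (1 - t ^ 2 / 2) * p.2.1 + (t ^ 2 / 2) * p.2.2,
      t * p.1 - (t ^ 2 / 2) * p.2.1 + (1 + t ^ 2 / 2) * p.2.2 + lam) : ℝ × ℝ × ℝ) with hR
  have hfwd : ∀ p : ℝ × ℝ × ℝ, p ∈ S → R p ∈ S := by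
    intro p hp
    rw [← hinv]
    exact Set.mem_image_of_mem R hp
  set c : ℝ := f (0, 0) with hc
  -- the orbit of (0,0,c), in closed form
  set X : ℕ → ℝ := fun n => t * (c * n + lam * n * (n - 1) / 2) with hX
  set Y : ℕ → ℝ := fun n =>
    t ^ 2 * (c * n ^ 2 / 2 + lam * n * (n - 1) * (2 * n - 1) / 12) with hY
  set Z : ℕ → ℝ := fun n => c + n * lam + Y n with hZ
  have horb : ∀ n : ℕ, ((X n, Y n, Z n) : ℝ × ℝ × ℝ) ∈ S := by
    intro n
    induction n with
    | zero =>
      have hx : X 0 = 0 := by simp [hX]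
      have hy : Y 0 = 0 := by simp [hY]
      have hz : Z 0 = c := by simp [hZ, hy]
      rw [hx, hy, hz]
      simp [hS, hc]
    | succ n ih =>
      have hstep : R ((X n, Y n, Z n) : ℝ × ℝ × ℝ) = ((X (n+1), Y (n+1), Z (n+1)) : ℝ × ℝ × ℝ) := by
        simp only [hR, hX, hY, hZ, Prod.mk.injEq]
        push_cast
        refine ⟨by ring, by ring, by ring⟩
      have := hfwd _ ih
      rwa [hstep] at this
  -- choose a large n
  obtain ⟨n, hn⟩ := exists_nat_gt
    (|12 * (t ^ 2 * c ^ 2 - t ^ 2 * c * lam) / (t ^ 2 * lam ^ 2)| + 1)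
  set N : ℝ := (n : ℝ) with hN
  have htl : (0:ℝ) < t ^ 2 * lam ^ 2 := by positivity
  have hN1 : 1 ≤ N := by
    have := abs_nonneg (12 * (t ^ 2 * c ^ 2 - t ^ 2 * c * lam) / (t ^ 2 * lam ^ 2))
    linarith
  have hNbig : 12 * (t ^ 2 * c ^ 2 - t ^ 2 * c * lam) ≤ (N - 1) * (t ^ 2 * lam ^ 2) := by
    have h1 : 12 * (t ^ 2 * c ^ 2 - t ^ 2 * c * lam) / (t ^ 2 * lam ^ 2) ≤ N - 1 := by
      have := le_abs_self (12 * (t ^ 2 * c ^ 2 - t ^ 2 * c * lam) / (t ^ 2 * lam ^ 2))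
      linarith
    calc 12 * (t ^ 2 * c ^ 2 - t ^ 2 * c * lam)
        = 12 * (t ^ 2 * c ^ 2 - t ^ 2 * c * lam) / (t ^ 2 * lam ^ 2) * (t ^ 2 * lam ^ 2) := by
          field_simp
      _ ≤ (N - 1) * (t ^ 2 * lam ^ 2) := by
          exact mul_le_mul_of_nonneg_right h1 htl.le
  -- Lipschitz inequality between q_n and q_0
  have hmem := horb n
  have hfn : Z n = f (X n, Y n) := hmem
  have hgraph := hlip (X n, Y n) (0, 0)
  rw [← hfn, ← hc] at hgraph
  simp only at hgraph
  -- rewrite it as a polynomial inequality in N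
  have hg : (N * lam + Y n) ^ 2 ≤ X n ^ 2 + Y n ^ 2 := by
    have : Z n - c = N * lam + Y n := by rw [hZ]; ring
    calc (N * lam + Y n) ^ 2 = (Z n - c) ^ 2 := by rw [this]
      _ ≤ (X n - 0) ^ 2 + (Y n - 0) ^ 2 := hgraph
      _ = X n ^ 2 + Y n ^ 2 := by ring
  have hXe : X n = t * (c * N + lam * N * (N - 1) / 2) := by rw [hX]
  have hYe : Y n = t ^ 2 * (c * N ^ 2 / 2 + lam * N * (N - 1) * (2 * N - 1) / 12) := by rw [hY]
  rw [hXe, hYe] at hg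
  -- key inequality after dividing by N^2
  have hN2 : (0:ℝ) < N ^ 2 := by nlinarith
  have key : lam ^ 2 + t ^ 2 * lam ^ 2 * (N ^ 2 - 1) / 12 ≤ t ^ 2 * c ^ 2 - t ^ 2 * c * lam := by
    have h2 : N ^ 2 * (lam ^ 2 + t ^ 2 * lam ^ 2 * (N ^ 2 - 1) / 12)
        ≤ N ^ 2 * (t ^ 2 * c ^ 2 - t ^ 2 * c * lam) := by nlinarith [hg]
    exact le_of_mul_le_mul_left h2 hN2
  have hl2 : (0:ℝ) < lam ^ 2 := by positivity
  have hprod : 0 ≤ (N - 1) * N * (t ^ 2 * lam ^ 2) := by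
    apply mul_nonneg (mul_nonneg (by linarith) (by linarith)) htl.le
  nlinarith [key, hNbig, hl2, hprod]
end

section
/- Let X : M → ℝ³ be a spacelike immersion with isolated singularities that is complete (every divergent path in M has infinite length for the induced metric). Then for any spacelike plane Π with orthogonal projection π, and any piecewise smooth curve β : [0,1] → Π of finite length, every inextensible lift α : [0,ε) → M of β under π∘X with ε < 1 has finite length; hence α is not divergent and π∘X has the path-lifting property. Consequently complete spacelike immersions with isolated singularities are entire multigraphs. -/
/-- Minkowski bilinear form on ℝ³. -/
noncomputable def BL (p q : ℝ × ℝ × ℝ) : ℝ :=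
  p.1 * q.1 + p.2.1 * q.2.1 - p.2.2 * q.2.2

/-- Lorentzian orthogonal projection onto the plane through 0 orthogonal to `v`. -/
noncomputable def projL (v z : ℝ × ℝ × ℝ) : ℝ × ℝ × ℝ := z - (BL z v / QL v) • v

/-- A path `α : [0,ε) → M` is divergent if it eventually leaves every compact set. -/
def Diverges (α : ℝ → ℝ × ℝ) (ε : ℝ) : Prop :=
  ∀ K : Set (ℝ × ℝ), IsCompact K →
    ∃ t₀ ∈ Set.Ico (0:ℝ) ε, ∀ t ∈ Set.Ioo t₀ ε, α t ∉ K

/-- The set of partial lengths (for the metric induced by `X`) of the path `α` on `[0,ε)`. -/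
noncomputable def PartialLengths (X : ℝ × ℝ → ℝ × ℝ × ℝ) (α : ℝ → ℝ × ℝ) (ε : ℝ) : Set ℝ :=
  {L | ∃ b ∈ Set.Ico (0:ℝ) ε,
        L = ∫ t in (0:ℝ)..b, Real.sqrt (QL (deriv (fun s => X (α s)) t))}

/-!
Projecting along a timelike vector `v` can only increase the Minkowski square of a vector,
since `Q(projL v w) = Q(w) - ⟨w, v⟩² / Q(v)` and `Q(v) < 0`. Hence the speed of a lift `X ∘ α`
is bounded by (a constant multiple of) the Euclidean speed of the projected curve `β`, so a lift
defined on a bounded interval has bounded length; by completeness it cannot diverge.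
-/

open Filter Topology

lemma QL_sub_smul (v w : ℝ × ℝ × ℝ) (c : ℝ) :
    QL (w - c • v) = QL w - 2 * c * BL w v + c ^ 2 * QL v := by
  simp only [QL, BL, Prod.fst_sub, Prod.snd_sub, Prod.smul_fst, Prod.smul_snd, smul_eq_mul]
  ring

lemma QL_projL {v : ℝ × ℝ × ℝ} (hv : QL v ≠ 0) (w : ℝ × ℝ × ℝ) :
    QL (projL v w) = QL w - BL w v ^ 2 / QL v := by
  rw [projL, QL_sub_smul]
  field_simp
  ring

lemma QL_le_QL_projL {v : ℝ × ℝ × ℝ} (hv : QL v < 0) (w : ℝ × ℝ × ℝ) :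
    QL w ≤ QL (projL v w) := by
  rw [QL_projL hv.ne]
  have : BL w v ^ 2 / QL v ≤ 0 := div_nonpos_of_nonneg_of_nonpos (sq_nonneg _) hv.le
  linarith

lemma QL_le_two_mul_norm_sq (p : ℝ × ℝ × ℝ) : QL p ≤ 2 * ‖p‖ ^ 2 := by
  have h₁ : p.1 ^ 2 ≤ ‖p‖ ^ 2 := by
    rw [← sq_abs]
    exact pow_le_pow_left₀ (abs_nonneg _) (norm_fst_le p) 2
  have h₂ : p.2.1 ^ 2 ≤ ‖p‖ ^ 2 := by
    rw [← sq_abs]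
    exact pow_le_pow_left₀ (abs_nonneg _) ((norm_fst_le p.2).trans (norm_snd_le p)) 2
  have := sq_nonneg p.2.2
  simp only [QL]
  linarith

lemma sqrt_QL_le_of_norm_projL_le {v w : ℝ × ℝ × ℝ} {C : ℝ} (hv : QL v < 0)
    (h : ‖projL v w‖ ≤ C) : √(QL w) ≤ √2 * C := by
  have hC : 0 ≤ C := (norm_nonneg _).trans h
  have hQ : QL w ≤ 2 * C ^ 2 := calc
    QL w ≤ QL (projL v w) := QL_le_QL_projL hv w
    _ ≤ 2 * ‖projL v w‖ ^ 2 := QL_le_two_mul_norm_sq _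
    _ ≤ 2 * C ^ 2 := by gcongr
  calc √(QL w) ≤ √(2 * C ^ 2) := Real.sqrt_le_sqrt hQ
    _ = √2 * C := by rw [Real.sqrt_mul zero_le_two, Real.sqrt_sq hC]

lemma HasDerivAt.projL {γ : ℝ → ℝ × ℝ × ℝ} {w : ℝ × ℝ × ℝ} {t : ℝ} (h : HasDerivAt γ w t)
    (v : ℝ × ℝ × ℝ) : HasDerivAt (fun s => projL v (γ s)) (projL v w) t := by
  have h₁ : HasDerivAt (fun s => (γ s).1) w.1 t := h.fst
  have h₂ : HasDerivAt (fun s => (γ s).2.1) w.2.1 t := h.snd.fst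
  have h₃ : HasDerivAt (fun s => (γ s).2.2) w.2.2 t := h.snd.snd
  have hBL : HasDerivAt (fun s => BL (γ s) v) (BL w v) t := by
    simpa [BL, Pi.add_def, Pi.sub_def] using
      ((h₁.mul_const v.1).add (h₂.mul_const v.2.1)).sub (h₃.mul_const v.2.2)
  simpa [_root_.projL, Pi.sub_def] using h.sub ((hBL.div_const (QL v)).smul_const v)

lemma sqrt_QL_deriv_le_of_projL_eventuallyEq {v : ℝ × ℝ × ℝ} {γ β : ℝ → ℝ × ℝ × ℝ} {t : ℝ}
    (hv : QL v < 0) (hγ : DifferentiableAt ℝ γ t)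
    (hβ : (fun s => projL v (γ s)) =ᶠ[𝓝 t] β) :
    √(QL (deriv γ t)) ≤ √2 * ‖deriv β t‖ := by
  have hβ' : HasDerivAt β (projL v (deriv γ t)) t :=
    (hγ.hasDerivAt.projL v).congr_of_eventuallyEq hβ.symm
  exact sqrt_QL_le_of_norm_projL_le hv (by rw [hβ'.deriv])

lemma bddAbove_partialLengths_of_speed_le {X : ℝ × ℝ → ℝ × ℝ × ℝ} {α : ℝ → ℝ × ℝ}
    {ε M : ℝ} (hM : 0 ≤ M)
    (hspeed : ∀ t ∈ Set.Ioo 0 ε, √(QL (deriv (fun s => X (α s)) t)) ≤ M) :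
    BddAbove (PartialLengths X α ε) := by
  refine ⟨M * ε, ?_⟩
  rintro L ⟨b, ⟨hb0, hbε⟩, rfl⟩
  have hbound : ∀ t ∈ Set.uIoc 0 b, ‖√(QL (deriv (fun s => X (α s)) t))‖ ≤ M := by
    rw [Set.uIoc_of_le hb0]
    intro t ht
    rw [Real.norm_of_nonneg (Real.sqrt_nonneg _)]
    exact hspeed t ⟨ht.1, ht.2.trans_lt hbε⟩
  calc _ ≤ ‖∫ t in (0 : ℝ)..b, √(QL (deriv (fun s => X (α s)) t))‖ := le_abs_self _
    _ ≤ M * |b - 0| := intervalIntegral.norm_integral_le_of_norm_le_const hbound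
    _ ≤ M * ε := by rw [sub_zero, abs_of_nonneg hb0]; gcongr

theorem complete_spacelike_immersion_lifts_have_finite_length_general
    (X : ℝ × ℝ → ℝ × ℝ × ℝ) (hX : Differentiable ℝ X)
    (hcomplete : ∀ (α : ℝ → ℝ × ℝ) (ε : ℝ), 0 < ε →
      ContinuousOn α (Set.Ico 0 ε) →
      (∀ t ∈ Set.Ico (0:ℝ) ε, DifferentiableAt ℝ α t) →
      Diverges α ε → ¬ BddAbove (PartialLengths X α ε))
    (v : ℝ × ℝ × ℝ) (hv : QL v < 0)
    (β : ℝ → ℝ × ℝ × ℝ)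
    (C : ℝ) (hβlen : ∀ t : ℝ, ‖deriv β t‖ ≤ C)
    (ε : ℝ) (hε0 : 0 < ε)
    (α : ℝ → ℝ × ℝ) (hαc : ContinuousOn α (Set.Ico 0 ε))
    (hαd : ∀ t ∈ Set.Ico (0:ℝ) ε, DifferentiableAt ℝ α t)
    (hlift : ∀ t ∈ Set.Ico (0:ℝ) ε, projL v (X (α t)) = β t) :
    BddAbove (PartialLengths X α ε) ∧ ¬ Diverges α ε := by
  have hC : 0 ≤ C := (norm_nonneg _).trans (hβlen 0)
  have hbdd : BddAbove (PartialLengths X α ε) := by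
    refine bddAbove_partialLengths_of_speed_le (by positivity : 0 ≤ √2 * C) fun t ht => ?_
    have hγ : DifferentiableAt ℝ (fun s => X (α s)) t :=
      (hX _).comp t (hαd t (Set.Ioo_subset_Ico_self ht))
    have hliftₜ : (fun s => projL v (X (α s))) =ᶠ[𝓝 t] β :=
      eventually_of_mem (Ioo_mem_nhds ht.1 ht.2) fun s hs => hlift s (Set.Ioo_subset_Ico_self hs)
    calc √(QL (deriv (fun s => X (α s)) t)) ≤ √2 * ‖deriv β t‖ :=
          sqrt_QL_deriv_le_of_projL_eventuallyEq hv hγ hliftₜ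
      _ ≤ √2 * C := by gcongr; exact hβlen t
  exact ⟨hbdd, fun hdiv => hcomplete α ε hε0 hαc hαd hdiv hbdd⟩

/-- a complete spacelike immersion (with isolated singularities,
where the induced metric is only ≥ 0) is an entire multigraph: for any spacelike
plane (orthogonal to a timelike `v`) and any finite-length curve `β` in it, every
lift `α : [0,ε) → M`, `ε < 1`, of `β` under the projection has finite length and
is not divergent, giving the path-lifting property. -/
theorem complete_spacelike_immersion_lifts_have_finite_length
    (X : ℝ × ℝ → ℝ × ℝ × ℝ) (hX : Differentiable ℝ X)
    (hspace : ∀ (p : ℝ × ℝ) (u : ℝ × ℝ), 0 ≤ QL (fderiv ℝ X p u))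
    (hcomplete : ∀ (α : ℝ → ℝ × ℝ) (ε : ℝ), 0 < ε →
      ContinuousOn α (Set.Ico 0 ε) →
      (∀ t ∈ Set.Ico (0:ℝ) ε, DifferentiableAt ℝ α t) →
      Diverges α ε → ¬ BddAbove (PartialLengths X α ε))
    (v : ℝ × ℝ × ℝ) (hv : QL v < 0)
    (β : ℝ → ℝ × ℝ × ℝ) (hβd : Differentiable ℝ β)
    (hβplane : ∀ t : ℝ, BL (β t) v = 0)
    (C : ℝ) (hβlen : ∀ t : ℝ, ‖deriv β t‖ ≤ C)
    (ε : ℝ) (hε0 : 0 < ε) (hε1 : ε < 1)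
    (α : ℝ → ℝ × ℝ) (hαc : ContinuousOn α (Set.Ico 0 ε))
    (hαd : ∀ t ∈ Set.Ico (0:ℝ) ε, DifferentiableAt ℝ α t)
    (hlift : ∀ t ∈ Set.Ico (0:ℝ) ε, projL v (X (α t)) = β t) :
    BddAbove (PartialLengths X α ε) ∧ ¬ Diverges α ε :=
  complete_spacelike_immersion_lifts_have_finite_length_general X hX hcomplete v hv β C hβlen ε hε0
    α hαc hαd hlift
end

section
/- Let g(z,w) = z and φ₃ = dz/(w(az−1)(bz−1)) on the Riemann surface S = {(z,w) : w² = (z−a)(z−b)/((az−1)(bz−1))}, with b < a < 1, a > 0, b ≠ 0. Then φ₃ (and hence Φ = (φ₁,φ₂,φ₃) with φ₁ = (i/2)(1/g−g)φ₃, φ₂ = −(1/2)(1/g+g)φ₃) has a simple pole at the point over z = 0, and Re(2πi·Res₀ Φ) = Re(−π/√(ab), −iπ/√(ab), 0); in particular this vector is (−π/√(ab), 0, 0) when b > 0 and (0, −π/√(−ab)·s, 0) for a sign s when b < 0, i.e., the period vector is horizontal and spacelike. -/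
open Filter Topology

/-!
Near the point over `z = 0` the factor `1 / (w (az - 1)(bz - 1))` is continuous with value
`1 / w(0) = 1 / s ≠ 0`, so the only pole of `Φ` there comes from the factor `1 / g = 1 / z` in
`φ₁, φ₂`. Hence the residues are `(i / 2s, -1 / 2s, 0)` and `2πi` times them is
`(-π/s, i · (-π/s), 0)`. The real parts of `u` and `i u` are `Re u` and `-Im u`, which do not
both vanish for `u = -π/s ≠ 0`.
-/

open Complex

section Residue

variable {𝕜 : Type*} [NormedField 𝕜]

theorem tendsto_mul_const_mul_one_div_add_mul (k c : 𝕜) :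
    Tendsto (fun z : 𝕜 => z * (k * (1 / z + c * z))) (𝓝[≠] 0) (𝓝 k) := by
  have hcont : Continuous fun z : 𝕜 => k * (1 + c * z ^ 2) := by fun_prop
  have hlim : Tendsto (fun z : 𝕜 => k * (1 + c * z ^ 2)) (𝓝 0) (𝓝 k) := by
    simpa using hcont.tendsto 0
  refine (hlim.mono_left nhdsWithin_le_nhds).congr' ?_
  filter_upwards [self_mem_nhdsWithin] with z (hz : z ≠ 0)
  field_simp

theorem tendsto_mul_mul_one_div_of_tendsto {m D : 𝕜 → 𝕜} {c s : 𝕜}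
    (hm : Tendsto (fun z => z * m z) (𝓝[≠] 0) (𝓝 c)) (hD : Tendsto D (𝓝 0) (𝓝 s))
    (hs : s ≠ 0) :
    Tendsto (fun z => z * (m z * (1 / D z))) (𝓝[≠] 0) (𝓝 (c / s)) := by
  have hinv : Tendsto (fun z => 1 / D z) (𝓝[≠] 0) (𝓝 (1 / s)) :=
    tendsto_const_nhds.div (hD.mono_left nhdsWithin_le_nhds) hs
  simpa only [mul_assoc, mul_one_div c s] using hm.mul hinv

end Residue

theorem re_sq_add_re_I_mul_sq_pos {u : ℂ} (hu : u ≠ 0) : 0 < u.re ^ 2 + (I * u).re ^ 2 := by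
  simpa [I_mul_re, sq, normSq_apply] using normSq_pos.2 hu

theorem riemann_type_residue_period_general (a b : ℝ)
    (s : ℂ) (hs0 : s ≠ 0)
    (w : ℂ → ℂ) (hw0 : w 0 = s) (hwc : ContinuousAt w 0)
    (r₁ r₂ r₃ : ℂ)
    (h₃ : Tendsto (fun z : ℂ =>
        z * (1 / (w z * ((a:ℂ) * z - 1) * ((b:ℂ) * z - 1))))
      (𝓝[≠] (0:ℂ)) (𝓝 r₃))
    (h₁ : Tendsto (fun z : ℂ =>
        z * ((Complex.I / 2) * (1 / z - z) *
          (1 / (w z * ((a:ℂ) * z - 1) * ((b:ℂ) * z - 1)))))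
      (𝓝[≠] (0:ℂ)) (𝓝 r₁))
    (h₂ : Tendsto (fun z : ℂ =>
        z * (-(1 / 2) * (1 / z + z) *
          (1 / (w z * ((a:ℂ) * z - 1) * ((b:ℂ) * z - 1)))))
      (𝓝[≠] (0:ℂ)) (𝓝 r₂)) :
    (2 * (Real.pi : ℂ) * Complex.I * r₁).re = (-(Real.pi : ℂ) / s).re ∧
    (2 * (Real.pi : ℂ) * Complex.I * r₂).re = (-(Real.pi : ℂ) * Complex.I / s).re ∧
    (2 * (Real.pi : ℂ) * Complex.I * r₃).re = 0 ∧
    0 < ((2 * (Real.pi : ℂ) * Complex.I * r₁).re) ^ 2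
        + ((2 * (Real.pi : ℂ) * Complex.I * r₂).re) ^ 2 := by
  have hD : Tendsto (fun z : ℂ => w z * ((a:ℂ) * z - 1) * ((b:ℂ) * z - 1)) (𝓝 0) (𝓝 s) := by
    have hcont : ContinuousAt (fun z : ℂ => w z * ((a:ℂ) * z - 1) * ((b:ℂ) * z - 1)) 0 :=
      (hwc.mul (by fun_prop)).mul (by fun_prop)
    simpa [hw0] using hcont.tendsto
  obtain rfl : r₃ = 0 := tendsto_nhds_unique h₃ <| by
    simpa using tendsto_mul_mul_one_div_of_tendsto (m := fun _ => 1)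
      (((continuous_mul_const 1).tendsto' 0 0 (zero_mul 1)).mono_left nhdsWithin_le_nhds) hD hs0
  obtain rfl : r₁ = I / 2 / s := tendsto_nhds_unique h₁ <| by
    simpa [sub_eq_add_neg] using tendsto_mul_mul_one_div_of_tendsto
      (tendsto_mul_const_mul_one_div_add_mul (I / 2) (-1)) hD hs0
  obtain rfl : r₂ = -(1 / 2) / s := tendsto_nhds_unique h₂ <|
    tendsto_mul_mul_one_div_of_tendsto (by simpa using
      tendsto_mul_const_mul_one_div_add_mul (-(1 / 2) : ℂ) 1) hD hs0
  have e₁ : 2 * (Real.pi : ℂ) * I * (I / 2 / s) = -(Real.pi : ℂ) / s := by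
    field_simp; simp [I_sq]
  have e₂ : 2 * (Real.pi : ℂ) * I * (-(1 / 2) / s) = I * (-(Real.pi : ℂ) / s) := by
    field_simp
  rw [e₁, e₂, show -(Real.pi : ℂ) * I / s = I * (-(Real.pi : ℂ) / s) by ring]
  exact ⟨rfl, rfl, by simp, re_sq_add_re_I_mul_sq_pos (by simp [hs0, Real.pi_ne_zero])⟩

/-- on the Riemann surface `w² = (z−a)(z−b)/((az−1)(bz−1))`
(`b < a < 1`, `a > 0`, `b ≠ 0`) with `g = z`, `φ₃ = dz/(w(az−1)(bz−1))`, the data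
`Φ = (φ₁,φ₂,φ₃)` has a simple pole at the point over `z = 0` with `w(0) = s`,
`s² = ab`, and the residues `rⱼ = lim_{z→0} z·fⱼ(z)` satisfy
`Re(2πi·(r₁,r₂,r₃)) = Re(−π/s, −iπ/s, 0)`; in particular the period vector is
horizontal and spacelike. -/
theorem riemann_type_residue_period (a b : ℝ) (ha : 0 < a) (ha1 : a < 1)
    (hb : b ≠ 0) (hba : b < a)
    (s : ℂ) (hs : s ^ 2 = (a : ℂ) * (b : ℂ)) (hs0 : s ≠ 0)
    (w : ℂ → ℂ) (hw0 : w 0 = s) (hwc : ContinuousAt w 0)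
    (hwsq : ∀ᶠ z in 𝓝 (0:ℂ),
      (w z) ^ 2 * (((a:ℂ) * z - 1) * ((b:ℂ) * z - 1)) = (z - a) * (z - b))
    (r₁ r₂ r₃ : ℂ)
    (h₃ : Tendsto (fun z : ℂ =>
        z * (1 / (w z * ((a:ℂ) * z - 1) * ((b:ℂ) * z - 1))))
      (𝓝[≠] (0:ℂ)) (𝓝 r₃))
    (h₁ : Tendsto (fun z : ℂ =>
        z * ((Complex.I / 2) * (1 / z - z) *
          (1 / (w z * ((a:ℂ) * z - 1) * ((b:ℂ) * z - 1)))))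
      (𝓝[≠] (0:ℂ)) (𝓝 r₁))
    (h₂ : Tendsto (fun z : ℂ =>
        z * (-(1 / 2) * (1 / z + z) *
          (1 / (w z * ((a:ℂ) * z - 1) * ((b:ℂ) * z - 1)))))
      (𝓝[≠] (0:ℂ)) (𝓝 r₂)) :
    (2 * (Real.pi : ℂ) * Complex.I * r₁).re = (-(Real.pi : ℂ) / s).re ∧
    (2 * (Real.pi : ℂ) * Complex.I * r₂).re = (-(Real.pi : ℂ) * Complex.I / s).re ∧
    (2 * (Real.pi : ℂ) * Complex.I * r₃).re = 0 ∧
    0 < ((2 * (Real.pi : ℂ) * Complex.I * r₁).re) ^ 2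
        + ((2 * (Real.pi : ℂ) * Complex.I * r₂).re) ^ 2 :=
  riemann_type_residue_period_general a b s hs0 w hw0 hwc r₁ r₂ r₃ h₃ h₁ h₂
end
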